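/- arXiv:2407.04612 — 5 statements merged into one kernel-verified Lean document; each statement's English description precedes it below -/
import Mathlib

section
/- Let F : ℝⁿ → ℂⁿ be defined by F(x) = e^{iφ(|x|)} x for a smooth function φ, so that dF(x)_{ij} = e^{iφ(r)}(δ_{ij} + i (x_i x_j / r) φ'(r)) with r = |x|. Then for every nonzero v ∈ ℂⁿ, v̄ · dF(x)v = e^{iφ(r)}(|v|² + i |x·v|² φ'(r)/r) ≠ 0; hence dF(x) : ℂⁿ → ℂⁿ is injective and the image of F is a maximally totally real submanifold of ℂⁿ. -/
/-- For `F(x) = e^{iφ(|x|)}x` with differential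
`dF(x)v = e^{iφ(r)}(v + i (φ'(r)/r) (x·v) x)`, for every nonzero `v ∈ ℂⁿ` one has
`v̄ · dF(x)v = e^{iφ(r)}(|v|² + i|x·v|²φ'(r)/r) ≠ 0`; hence `dF(x) : ℂⁿ → ℂⁿ` is
injective (so the image of `F` is maximally totally real). -/
theorem complex_scaling_totally_real (n : ℕ) (x : Fin n → ℝ) (hx : x ≠ 0)
    (φ : ℝ → ℝ) (hφ : ContDiff ℝ (⊤ : ℕ∞) φ) :
    let r : ℝ := Real.sqrt (∑ i, x i ^ 2)
    let c : ℝ := deriv φ r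
    let dF : (Fin n → ℂ) → (Fin n → ℂ) := fun v i =>
      Complex.exp (Complex.I * ((φ r : ℝ) : ℂ)) *
        (v i + Complex.I * ((x i : ℂ) * ((c / r : ℝ) : ℂ)) * ∑ j, (x j : ℂ) * v j)
    (∀ v : Fin n → ℂ, v ≠ 0 →
      (∑ i, (starRingEnd ℂ) (v i) * dF v i
          = Complex.exp (Complex.I * ((φ r : ℝ) : ℂ)) *
              (((∑ i, ‖v i‖ ^ 2 : ℝ) : ℂ) +
                Complex.I * ((‖∑ j, (x j : ℂ) * v j‖ ^ 2 : ℝ) : ℂ) *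
                  ((c / r : ℝ) : ℂ))) ∧
      ∑ i, (starRingEnd ℂ) (v i) * dF v i ≠ 0) ∧
    Function.Injective dF := by
  intro r c dF
  set e : ℂ := Complex.exp (Complex.I * ((φ r : ℝ) : ℂ)) with he
  have he0 : e ≠ 0 := Complex.exp_ne_zero _
  -- the key equality, valid for all v
  have key : ∀ v : Fin n → ℂ,
      ∑ i, (starRingEnd ℂ) (v i) * dF v i
        = e * (((∑ i, ‖v i‖ ^ 2 : ℝ) : ℂ) +
            Complex.I * ((‖∑ j, (x j : ℂ) * v j‖ ^ 2 : ℝ) : ℂ) *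
              ((c / r : ℝ) : ℂ)) := by
    intro v
    set S : ℂ := ∑ j, (x j : ℂ) * v j with hS
    have hconjS : (starRingEnd ℂ) S = ∑ j, (x j : ℂ) * (starRingEnd ℂ) (v j) := by
      rw [hS, map_sum]
      refine Finset.sum_congr rfl fun j _ => ?_
      simp [Complex.conj_ofReal]
    have h1 : ∑ i, (starRingEnd ℂ) (v i) * dF v i
        = e * ((∑ i, (starRingEnd ℂ) (v i) * v i) +
            Complex.I * ((c / r : ℝ) : ℂ) * S * ∑ i, (x i : ℂ) * (starRingEnd ℂ) (v i)) := by
      calc ∑ i, (starRingEnd ℂ) (v i) * dF v i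
          = ∑ i, (e * ((starRingEnd ℂ) (v i) * v i) +
              (e * Complex.I * ((c / r : ℝ) : ℂ) * S) * ((x i : ℂ) * (starRingEnd ℂ) (v i))) :=
            Finset.sum_congr rfl fun i _ => by simp only [dF, ← hS, ← he]; ring
        _ = _ := by
            rw [Finset.sum_add_distrib, ← Finset.mul_sum, ← Finset.mul_sum]; ring
    have h2 : (∑ i, (starRingEnd ℂ) (v i) * v i)
        = ((∑ i, ‖v i‖ ^ 2 : ℝ) : ℂ) := by
      push_cast
      refine Finset.sum_congr rfl fun i _ => ?_
      rw [mul_comm, Complex.mul_conj, Complex.normSq_eq_norm_sq]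
      push_cast
      ring
    have h3 : S * (starRingEnd ℂ) S = ((‖S‖ ^ 2 : ℝ) : ℂ) := by
      rw [Complex.mul_conj, Complex.normSq_eq_norm_sq]
    rw [h1, ← hconjS, h2]
    congr 1
    rw [← h3]
    ring
  -- positivity of the real part
  have pos : ∀ v : Fin n → ℂ, v ≠ 0 → (0 : ℝ) < ∑ i, ‖v i‖ ^ 2 := by
    intro v hv
    obtain ⟨i, hi⟩ : ∃ i, v i ≠ 0 := by
      by_contra h
      push_neg at h
      exact hv (funext h)
    refine Finset.sum_pos' (fun j _ => by positivity) ⟨i, Finset.mem_univ i, ?_⟩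
    have : ‖v i‖ ≠ 0 := by simpa using hi
    positivity
  have ne : ∀ v : Fin n → ℂ, v ≠ 0 → ∑ i, (starRingEnd ℂ) (v i) * dF v i ≠ 0 := by
    intro v hv h0
    rw [key v] at h0
    rcases mul_eq_zero.mp h0 with h | h
    · exact he0 h
    · have hre : (((∑ i, ‖v i‖ ^ 2 : ℝ) : ℂ) +
          Complex.I * ((‖∑ j, (x j : ℂ) * v j‖ ^ 2 : ℝ) : ℂ) *
            ((c / r : ℝ) : ℂ)).re = ∑ i, ‖v i‖ ^ 2 := by
        simp only [Complex.add_re, Complex.mul_re, Complex.I_re, Complex.I_im,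
          Complex.ofReal_re, Complex.ofReal_im]
        ring
      rw [h] at hre
      simp only [Complex.zero_re] at hre
      exact absurd hre.symm (ne_of_gt (pos v hv))
  refine ⟨fun v hv => ⟨key v, ne v hv⟩, ?_⟩
  -- injectivity
  intro u w huw
  by_contra hne
  have hv : u - w ≠ 0 := sub_ne_zero.mpr hne
  have hlin : ∀ i, dF (u - w) i = dF u i - dF w i := by
    intro i
    simp only [dF, Pi.sub_apply]
    have : ∑ j, (x j : ℂ) * (u j - w j)
        = (∑ j, (x j : ℂ) * u j) - ∑ j, (x j : ℂ) * w j := by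
      rw [← Finset.sum_sub_distrib]
      exact Finset.sum_congr rfl fun j _ => by ring
    rw [this]
    ring
  have hz : ∀ i, dF (u - w) i = 0 := by
    intro i
    rw [hlin i, huw, sub_self]
  exact ne (u - w) hv (by simp [hz])
end

section
/- On the characteristic set Σ = {μξ² + η² + ν²/sin²θ + 2aξν = 0} (with (ξ,η,ν) ≠ 0), one has ξ ≠ 0, and moreover there is a constant c > 0 (depending only on m, a) such that ξ² > c(η² + ν²/sin²θ) on Σ. -/
/-!
Writing `t = ν / sin θ`, the cross term is `2aξν = 2a ξ t sin θ`, and Young's inequality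
`|2aξν| ≤ 2a² sin²θ ξ² + t²/2` lets the positive part `η² + t²` of the characteristic form absorb it.
Since `μ = (r - m)² + a² - m² ≥ a² - m²`, this leaves `η² + t² ≤ 2(m² + a²) ξ²` on `Σ`,
which forces `ξ ≠ 0` away from the zero section and gives the bound with `c = 1 / (2(m² + a²) + 1)`.
-/

lemma abs_two_mul_mul_le_of_ne_zero {a ξ ν s : ℝ} (hs : s ≠ 0) :
    |2 * a * ξ * ν| ≤ 2 * a ^ 2 * s ^ 2 * ξ ^ 2 + ν ^ 2 / (2 * s ^ 2) := by
  set t := ν / s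
  have hν : ν = s * t := (mul_div_cancel₀ ν hs).symm
  have hν2 : ν ^ 2 / (2 * s ^ 2) = t ^ 2 / 2 := by rw [hν]; field_simp
  rw [hν2, hν, abs_le]
  constructor <;> nlinarith [sq_nonneg (2 * a * s * ξ + t), sq_nonneg (2 * a * s * ξ - t)]

lemma sq_add_sq_div_le_of_char_eq_zero {μ a ξ η ν s : ℝ} (hs : s ≠ 0) (hs1 : s ^ 2 ≤ 1)
    (h : μ * ξ ^ 2 + η ^ 2 + ν ^ 2 / s ^ 2 + 2 * a * ξ * ν = 0) :
    η ^ 2 + ν ^ 2 / s ^ 2 ≤ 2 * (2 * a ^ 2 - μ) * ξ ^ 2 := by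
  have hyoung := (abs_le.mp (abs_two_mul_mul_le_of_ne_zero (a := a) (ξ := ξ) (ν := ν) hs)).1
  have hhalf : ν ^ 2 / (2 * s ^ 2) = ν ^ 2 / s ^ 2 / 2 := by ring
  have hs1' : a ^ 2 * s ^ 2 * ξ ^ 2 ≤ a ^ 2 * ξ ^ 2 := by
    nlinarith [mul_nonneg (sq_nonneg a) (sq_nonneg ξ)]
  nlinarith [sq_nonneg η]

lemma kerr_mu_ge (m a r : ℝ) : a ^ 2 - m ^ 2 ≤ r ^ 2 - 2 * m * r + a ^ 2 := by
  nlinarith [sq_nonneg (r - m)]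

lemma inv_add_one_mul_lt_of_le_mul {x y K : ℝ} (hK : 0 ≤ K) (hy : 0 < y) (h : x ≤ K * y) :
    (K + 1)⁻¹ * x < y := by
  rw [inv_mul_lt_iff₀ (by positivity)]
  linarith

theorem kerr_char_set_xi_elliptic_general (m a : ℝ) :
    ∃ c > 0, ∀ r θ ξ η ν : ℝ, 0 < r → 0 < θ → θ < Real.pi →
      ¬(ξ = 0 ∧ η = 0 ∧ ν = 0) →
      (r ^ 2 - 2 * m * r + a ^ 2) * ξ ^ 2 + η ^ 2 + ν ^ 2 / Real.sin θ ^ 2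
          + 2 * a * ξ * ν = 0 →
      ξ ≠ 0 ∧ c * (η ^ 2 + ν ^ 2 / Real.sin θ ^ 2) < ξ ^ 2 := by
  refine ⟨(2 * (m ^ 2 + a ^ 2) + 1)⁻¹, by positivity, ?_⟩
  intro r θ ξ η ν _ hθ hθπ hnz hchar
  have hs : Real.sin θ ≠ 0 := (Real.sin_pos_of_pos_of_lt_pi hθ hθπ).ne'
  have hbound : η ^ 2 + ν ^ 2 / Real.sin θ ^ 2 ≤ 2 * (m ^ 2 + a ^ 2) * ξ ^ 2 := by
    have := sq_add_sq_div_le_of_char_eq_zero hs (Real.sin_sq_le_one θ) hchar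
    nlinarith [kerr_mu_ge m a r, sq_nonneg ξ]
  have hξ : ξ ≠ 0 := by
    rintro rfl
    have hν : 0 ≤ ν ^ 2 / Real.sin θ ^ 2 := by positivity
    have hη : η = 0 := by nlinarith [sq_nonneg η]
    refine hnz ⟨rfl, hη, ?_⟩
    have : ν ^ 2 / Real.sin θ ^ 2 = 0 := by nlinarith [sq_nonneg η]
    simpa [hs] using this
  exact ⟨hξ, inv_add_one_mul_lt_of_le_mul (by positivity) (by positivity) hbound⟩

/-- On the characteristic set `Σ = {μξ² + η² + ν²/sin²θ + 2aξν = 0}` (zero section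
excluded) one has `ξ ≠ 0`, and there is `c > 0`, depending only on `m, a`, with
`ξ² > c(η² + ν²/sin²θ)` on `Σ`. -/
theorem kerr_char_set_xi_elliptic (m a : ℝ) (hm : 0 < m) (ha : -m < a ∧ a < m) :
    ∃ c > 0, ∀ r θ ξ η ν : ℝ, 0 < r → 0 < θ → θ < Real.pi →
      ¬(ξ = 0 ∧ η = 0 ∧ ν = 0) →
      (r ^ 2 - 2 * m * r + a ^ 2) * ξ ^ 2 + η ^ 2 + ν ^ 2 / Real.sin θ ^ 2
          + 2 * a * ξ * ν = 0 →
      ξ ≠ 0 ∧ c * (η ^ 2 + ν ^ 2 / Real.sin θ ^ 2) < ξ ^ 2 :=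
  kerr_char_set_xi_elliptic_general m a
end

section
/- With ρ_r = |ξ|⁻¹ and ρ_t = ρ_r² κ = (η² + ν²/sin²θ)/ξ², on the component Σ₊ = Σ ∩ {ξ > 0} of the characteristic set one has ρ_r H_p ρ_r = 2(r - m)ρ_r and ρ_r H_p ρ_t = 4(r - m)ρ_t; in particular, restricted to the radial set Λ₊ = {μ = 0, κ = 0, ξ > 0} over the horizon, ρ_r H_p ρ_r = 2√(m² - a²) ρ_r. -/
/-!
Along `H_p` the fiber variable obeys `H_p ξ = -2(r - m)ξ²`, so `ρ_r = ξ⁻¹` grows at the rate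
`ρ_r H_p ρ_r = 2(r - m)ρ_r`. The angular quantity `κ = η² + ν²/sin²θ` is conserved by `H_p`
(its `θ`- and `η`-variations cancel), so `ρ_t = κ ρ_r²` grows at twice that rate. Over the
horizon `r₊ - m = √(m² - a²)`.
-/

/-- The action of the Hamiltonian vector field of `p = μξ² + η² + ν²/sin²θ + 2aξν`
on a function `f(r, θ, φ, ξ, η, ν)`. -/
noncomputable def HpApply (m a : ℝ) (f : ℝ → ℝ → ℝ → ℝ → ℝ → ℝ → ℝ)
    (r θ φ ξ η ν : ℝ) : ℝ :=
  2 * ((r ^ 2 - 2 * m * r + a ^ 2) * ξ + a * ν) * deriv (fun r' => f r' θ φ ξ η ν) r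
    + 2 * η * deriv (fun θ' => f r θ' φ ξ η ν) θ
    + 2 * (ν / Real.sin θ ^ 2 + 2 * a * ξ) * deriv (fun φ' => f r θ φ' ξ η ν) φ
    - 2 * (r - m) * ξ ^ 2 * deriv (fun ξ' => f r θ φ ξ' η ν) ξ
    + 2 * (Real.cos θ / Real.sin θ ^ 3) * ν ^ 2 * deriv (fun η' => f r θ φ ξ η' ν) η

open Real

section

variable {m a r θ φ ξ η ν : ℝ}

theorem hpApply_fun_fiber (g : ℝ → ℝ) :
    HpApply m a (fun _ _ _ ξ' _ _ => g ξ') r θ φ ξ η ν = -(2 * (r - m) * ξ ^ 2 * deriv g ξ) := by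
  simp only [HpApply, deriv_const']
  ring

theorem deriv_abs_inv_of_pos (hξ : 0 < ξ) : deriv (fun x : ℝ => |x|⁻¹) ξ = -(ξ ^ 2)⁻¹ := by
  have h : (fun x : ℝ => |x|⁻¹) =ᶠ[nhds ξ] fun x => x⁻¹ := by
    filter_upwards [eventually_gt_nhds hξ] with x hx
    rw [abs_of_pos hx]
  rw [h.deriv_eq, deriv_inv]

theorem hasDerivAt_inv_sin_sq (hθ : sin θ ≠ 0) :
    HasDerivAt (fun θ' => (sin θ' ^ 2)⁻¹) (-(2 * cos θ) / sin θ ^ 3) θ :=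
  ((hasDerivAt_sin θ).fun_pow 2).fun_inv (pow_ne_zero 2 hθ) |>.congr_deriv <| by
    field_simp
    ring

theorem deriv_const_div_sq (c : ℝ) (hξ : ξ ≠ 0) :
    deriv (fun x => c / x ^ 2) ξ = -(2 * c) / ξ ^ 3 := by
  have h := ((hasDerivAt_pow 2 ξ).fun_inv (pow_ne_zero 2 hξ)).const_mul c
  simp only [← div_eq_mul_inv] at h
  rw [h.deriv]
  field_simp
  ring

theorem hpApply_abs_inv_of_pos (hξ : 0 < ξ) :
    HpApply m a (fun _ _ _ ξ' _ _ => |ξ'|⁻¹) r θ φ ξ η ν = 2 * (r - m) := by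
  rw [hpApply_fun_fiber, deriv_abs_inv_of_pos hξ]
  field_simp

theorem hpApply_kappa_div_sq (hθ : sin θ ≠ 0) (hξ : ξ ≠ 0) :
    HpApply m a (fun _ θ' _ ξ' η' ν' => (η' ^ 2 + ν' ^ 2 / sin θ' ^ 2) / ξ' ^ 2) r θ φ ξ η ν
      = 4 * (r - m) * (η ^ 2 + ν ^ 2 / sin θ ^ 2) / ξ := by
  have hθ_deriv : deriv (fun θ' => (η ^ 2 + ν ^ 2 / sin θ' ^ 2) / ξ ^ 2) θ
      = ν ^ 2 * (-(2 * cos θ) / sin θ ^ 3) / ξ ^ 2 := by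
    have h := (((hasDerivAt_inv_sin_sq hθ).const_mul (ν ^ 2)).const_add (η ^ 2)).div_const (ξ ^ 2)
    simpa only [div_eq_mul_inv] using h.deriv
  have hη_deriv : deriv (fun η' => (η' ^ 2 + ν ^ 2 / sin θ ^ 2) / ξ ^ 2) η = 2 * η / ξ ^ 2 := by
    rw [(((hasDerivAt_pow 2 η).add_const _).div_const (ξ ^ 2)).deriv]
    ring
  simp only [HpApply, deriv_const', hθ_deriv, deriv_const_div_sq _ hξ, hη_deriv]
  field_simp
  ring

end

theorem kerr_radial_set_source_general (m a : ℝ)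
    (r θ φ ξ η ν : ℝ) (hθ : Real.sin θ ≠ 0) (hξ : 0 < ξ) :
    |ξ|⁻¹ * HpApply m a (fun _ _ _ ξ' _ _ => |ξ'|⁻¹) r θ φ ξ η ν
        = 2 * (r - m) * |ξ|⁻¹ ∧
    |ξ|⁻¹ * HpApply m a
        (fun _ θ' _ ξ' η' ν' => (η' ^ 2 + ν' ^ 2 / Real.sin θ' ^ 2) / ξ' ^ 2) r θ φ ξ η ν
        = 4 * (r - m) * ((η ^ 2 + ν ^ 2 / Real.sin θ ^ 2) / ξ ^ 2) ∧
    (r = m + Real.sqrt (m ^ 2 - a ^ 2) → η = 0 → ν = 0 →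
      |ξ|⁻¹ * HpApply m a (fun _ _ _ ξ' _ _ => |ξ'|⁻¹) r θ φ ξ η ν
        = 2 * Real.sqrt (m ^ 2 - a ^ 2) * |ξ|⁻¹) := by
  have hρr : |ξ|⁻¹ * HpApply m a (fun _ _ _ ξ' _ _ => |ξ'|⁻¹) r θ φ ξ η ν
      = 2 * (r - m) * |ξ|⁻¹ := by
    rw [hpApply_abs_inv_of_pos hξ, abs_of_pos hξ]
    field_simp
  refine ⟨hρr, ?_, fun hr _ _ => by rw [hρr, hr]; ring⟩
  rw [hpApply_kappa_div_sq hθ hξ.ne', abs_of_pos hξ]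
  field_simp

/-- With `ρ_r = |ξ|⁻¹` and `ρ_t = ρ_r²κ = (η² + ν²/sin²θ)/ξ²`, on `Σ₊ = Σ ∩ {ξ > 0}`
one has `ρ_r H_p ρ_r = 2(r - m)ρ_r` and `ρ_r H_p ρ_t = 4(r - m)ρ_t`; restricted to the
radial set `Λ₊ = {μ = 0, κ = 0, ξ > 0}` over the horizon, `ρ_r H_p ρ_r = 2√(m² - a²)ρ_r`. -/
theorem kerr_radial_set_source (m a : ℝ) (hm : 0 < m) (ha : -m < a ∧ a < m)
    (r θ φ ξ η ν : ℝ) (hθ : Real.sin θ ≠ 0) (hξ : 0 < ξ)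
    (hp : (r ^ 2 - 2 * m * r + a ^ 2) * ξ ^ 2 + η ^ 2 + ν ^ 2 / Real.sin θ ^ 2
        + 2 * a * ξ * ν = 0) :
    |ξ|⁻¹ * HpApply m a (fun _ _ _ ξ' _ _ => |ξ'|⁻¹) r θ φ ξ η ν
        = 2 * (r - m) * |ξ|⁻¹ ∧
    |ξ|⁻¹ * HpApply m a
        (fun _ θ' _ ξ' η' ν' => (η' ^ 2 + ν' ^ 2 / Real.sin θ' ^ 2) / ξ' ^ 2) r θ φ ξ η ν
        = 4 * (r - m) * ((η ^ 2 + ν ^ 2 / Real.sin θ ^ 2) / ξ ^ 2) ∧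
    (r = m + Real.sqrt (m ^ 2 - a ^ 2) → η = 0 → ν = 0 →
      |ξ|⁻¹ * HpApply m a (fun _ _ _ ξ' _ _ => |ξ'|⁻¹) r θ φ ξ η ν
        = 2 * Real.sqrt (m ^ 2 - a ^ 2) * |ξ|⁻¹) :=
  kerr_radial_set_source_general m a r θ φ ξ η ν hθ hξ
end

section
/- Let V_ν(r) = ((r² + a²)z - aν)²/μ(r) for fixed ν ∈ ℝ and z = ±1, on (r₊, ∞). Every critical point of V_ν in (r₊, ∞) satisfies V_ν'' > 0 at that point; consequently V_ν has at most one critical point in (r₊, ∞), and if (r₊² + a²)z - aν ≠ 0 then V_ν has exactly one critical point r_min ∈ (r₊, ∞), which is a strict global minimum on (r₊, ∞). -/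
/-!
Since `z² = 1`, `V = (r² + a² - c)²/μ` with `c = aνz`. With `φ(r) = r² + a² - 4rμ/μ'` one gets
`V' = (r² + a² - c)(c - φ)μ'/μ²`, and `μ' > 0` on `(r₊, ∞)`. Both factors `r² + a² - c` and `c - φ`
are strictly increasing there, and their sum `r² + a² - φ = 4rμ/μ'` is positive on `(r₊, ∞)` and
vanishes at `r₊`. Hence at a zero of the product the other factor is positive: this makes `V'' > 0`
there, and it forces the product to pass from negative to positive through that zero, so the zero is
unique and is a strict global minimum of `V`. If `r₊² + a² ≠ c`, the product is
`-(r₊² + a² - c)² < 0` at `r₊` and positive for large `r`, so it does vanish somewhere.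
-/

open Set Topology

theorem StrictMonoOn.sign_mul_of_add_pos {α β : Type*} [Preorder α] [CommRing β] [LinearOrder β]
    [IsStrictOrderedRing β] {s : Set α} {u v : α → β} (hu : StrictMonoOn u s)
    (hv : StrictMonoOn v s) (hsum : ∀ x ∈ s, 0 < u x + v x) {x₀ x : α} (hx₀ : x₀ ∈ s)
    (hx : x ∈ s) (h0 : u x₀ * v x₀ = 0) :
    (x < x₀ → u x * v x < 0) ∧ (x₀ < x → 0 < u x * v x) := by
  wlog hu0 : u x₀ = 0 generalizing u v
  · simpa only [mul_comm (u x)] using this hv hu (fun y hy => add_comm (u y) _ ▸ hsum y hy)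
      (by rw [mul_comm, h0]) ((mul_eq_zero.1 h0).resolve_left hu0)
  have hv₀ : 0 < v x₀ := by simpa only [hu0, zero_add] using hsum x₀ hx₀
  refine ⟨fun hlt => ?_, fun hlt => ?_⟩
  · have hux : u x < 0 := hu0 ▸ hu hx hx₀ hlt
    exact mul_neg_of_neg_of_pos hux (by linarith [hsum x hx])
  · exact mul_pos (hu0 ▸ hu hx₀ hx hlt) (hv₀.trans (hv hx₀ hx hlt))

theorem lt_of_deriv_neg_of_deriv_pos {f : ℝ → ℝ} {a x₀ : ℝ} (hx₀ : a < x₀)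
    (hf : ∀ x ∈ Ioi a, DifferentiableAt ℝ f x) (hneg : ∀ x ∈ Ioo a x₀, deriv f x < 0)
    (hpos : ∀ x ∈ Ioi x₀, 0 < deriv f x) {x : ℝ} (hx : a < x) (hne : x ≠ x₀) :
    f x₀ < f x := by
  have hcont : ContinuousOn f (Ioi a) :=
    continuousOn_of_forall_continuousAt fun y hy => (hf y hy).continuousAt
  rcases hne.lt_or_gt with hlt | hgt
  · refine strictAntiOn_of_deriv_neg (convex_Ioc a x₀) (hcont.mono Ioc_subset_Ioi_self)
      (by simpa only [interior_Ioc] using hneg) ⟨hx, hlt.le⟩ ⟨hx₀, le_rfl⟩ hlt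
  · exact strictMonoOn_of_deriv_pos (convex_Ici x₀) (hcont.mono (Ici_subset_Ioi.2 hx₀))
      (by simpa only [interior_Ici] using hpos) self_mem_Ici hgt.le hgt

noncomputable section

namespace Kerr

def mu (m a r : ℝ) : ℝ := r ^ 2 - 2 * m * r + a ^ 2

def rPlus (m a : ℝ) : ℝ := m + √(m ^ 2 - a ^ 2)

def potential (m a c r : ℝ) : ℝ := (r ^ 2 + a ^ 2 - c) ^ 2 / mu m a r

/-- `φ(r) = r² + a² - 4rμ(r)/μ'(r)`, in reduced form: a point `r > r₊` with `r² + a² ≠ c` is a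
critical point of `potential m a c` exactly when `c = φ(r)`. -/
def phi (m a r : ℝ) : ℝ := 3 * m ^ 2 - a ^ 2 - (r - m) ^ 2 + 2 * m * (m ^ 2 - a ^ 2) / (r - m)

def criticalFactor (m a c r : ℝ) : ℝ := (r ^ 2 + a ^ 2 - c) * (c - phi m a r)

variable {m a c r : ℝ}

theorem sq_sub_sq_nonneg (ha : |a| ≤ m) : 0 ≤ m ^ 2 - a ^ 2 :=
  sub_nonneg.2 (sq_le_sq.2 (ha.trans (le_abs_self m)))

theorem le_rPlus (m a : ℝ) : m ≤ rPlus m a := le_add_of_nonneg_right (Real.sqrt_nonneg _)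

theorem lt_rPlus (ha : |a| < m) : m < rPlus m a :=
  lt_add_of_pos_right m (Real.sqrt_pos.2 (sub_pos.2 (sq_lt_sq.2 (ha.trans_le (le_abs_self m)))))

theorem mu_rPlus (ha : |a| ≤ m) : mu m a (rPlus m a) = 0 := by
  have := Real.sq_sqrt (sq_sub_sq_nonneg ha)
  unfold mu rPlus
  linear_combination this

theorem mu_pos (hr : rPlus m a < r) : 0 < mu m a r := by
  have hlt : √(m ^ 2 - a ^ 2) < r - m := by unfold rPlus at hr; linarith
  have := (Real.sqrt_lt' ((Real.sqrt_nonneg _).trans_lt hlt)).1 hlt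
  unfold mu
  linarith

theorem sq_add_sq_sub_phi (hr : r ≠ m) :
    r ^ 2 + a ^ 2 - phi m a r = 2 * r * mu m a r / (r - m) := by
  have : r - m ≠ 0 := sub_ne_zero.2 hr
  unfold phi mu
  field_simp
  ring

theorem hasDerivAt_phi (hr : r ≠ m) :
    HasDerivAt (phi m a) (-2 * (r - m) - 2 * m * (m ^ 2 - a ^ 2) / (r - m) ^ 2) r := by
  have hsub : HasDerivAt (fun x => x - m) 1 r := (hasDerivAt_id' r).sub_const m
  refine (((hsub.pow 2).const_sub (3 * m ^ 2 - a ^ 2)).add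
    ((hasDerivAt_const r (2 * m * (m ^ 2 - a ^ 2))).div hsub (sub_ne_zero.2 hr))).congr_deriv ?_
  field_simp
  ring

theorem deriv_phi_neg (ha : |a| ≤ m) (hr : m < r) : deriv (phi m a) r < 0 := by
  rw [(hasDerivAt_phi (ne_of_gt hr)).deriv]
  have : 0 ≤ 2 * m * (m ^ 2 - a ^ 2) / (r - m) ^ 2 := by
    have : 0 ≤ m := (abs_nonneg a).trans ha
    have : 0 ≤ m ^ 2 - a ^ 2 := sq_sub_sq_nonneg ha
    positivity
  linarith

theorem strictAntiOn_phi (ha : |a| ≤ m) : StrictAntiOn (phi m a) (Ioi m) :=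
  strictAntiOn_of_deriv_neg (convex_Ioi m)
    (continuousOn_of_forall_continuousAt fun _ hx => (hasDerivAt_phi (ne_of_gt hx)).continuousAt)
    fun _ hx => deriv_phi_neg ha (by rwa [interior_Ioi] at hx)

theorem sq_add_sq_sub_phi_pos (hm : 0 ≤ m) (hr : rPlus m a < r) :
    0 < r ^ 2 + a ^ 2 - phi m a r := by
  have hrm : m < r := (le_rPlus m a).trans_lt hr
  rw [sq_add_sq_sub_phi hrm.ne']
  have := mu_pos hr
  have : 0 < r - m := sub_pos.2 hrm
  have : 0 < r := hm.trans_lt hrm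
  positivity

theorem hasDerivAt_criticalFactor (hr : r ≠ m) :
    HasDerivAt (criticalFactor m a c)
      (2 * r * (c - phi m a r) - (r ^ 2 + a ^ 2 - c) * deriv (phi m a) r) r :=
  ((((hasDerivAt_pow 2 r).add_const (a ^ 2)).sub_const c).mul
    ((hasDerivAt_phi hr).differentiableAt.hasDerivAt.const_sub c)).congr_deriv (by ring)

theorem sign_criticalFactor (ha : |a| ≤ m) {r₀ : ℝ} (hr₀ : rPlus m a < r₀)
    (h0 : criticalFactor m a c r₀ = 0) (hr : rPlus m a < r) :
    (r < r₀ → criticalFactor m a c r < 0) ∧ (r₀ < r → 0 < criticalFactor m a c r) := by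
  have hm : 0 ≤ m := (abs_nonneg a).trans ha
  have hu : StrictMonoOn (fun x => x ^ 2 + a ^ 2 - c) (Ioi (rPlus m a)) := fun x hx y _ hxy => by
    have : 0 ≤ x := hm.trans ((le_rPlus m a).trans (le_of_lt hx))
    dsimp only
    nlinarith
  have hv : StrictMonoOn (fun x => c - phi m a x) (Ioi (rPlus m a)) := fun x hx y hy hxy =>
    sub_lt_sub_left ((strictAntiOn_phi ha).mono (Ioi_subset_Ioi (le_rPlus m a)) hx hy hxy) c
  refine hu.sign_mul_of_add_pos hv (fun x hx => ?_) hr₀ hr h0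
  simpa only [sub_add_sub_cancel] using sq_add_sq_sub_phi_pos hm hx

theorem criticalFactor_rPlus (ha : |a| < m) :
    criticalFactor m a c (rPlus m a) = -(rPlus m a ^ 2 + a ^ 2 - c) ^ 2 := by
  have h := sq_add_sq_sub_phi (a := a) (lt_rPlus ha).ne'
  rw [mu_rPlus ha.le, mul_zero, zero_div] at h
  unfold criticalFactor
  linear_combination (rPlus m a ^ 2 + a ^ 2 - c) * h

theorem exists_criticalFactor_pos (ha : |a| ≤ m) :
    ∃ R, rPlus m a < R ∧ 0 < criticalFactor m a c R := by
  have hm : 0 ≤ m := (abs_nonneg a).trans ha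
  have hδ : 0 ≤ m ^ 2 - a ^ 2 := sq_sub_sq_nonneg ha
  set R := rPlus m a + 2 * m + |c| + 1
  have hR : 2 * m + |c| + 1 ≤ R - m := by linarith [le_rPlus m a]
  refine ⟨R, by linarith [abs_nonneg c], mul_pos ?_ ?_⟩
  · nlinarith [mul_self_le_mul_self (by positivity) (show |c| + 1 ≤ R by linarith),
      le_abs_self c, sq_nonneg a]
  · -- `φ(R) ≤ 4m² - (R - m)² < -|c|`
    have hbound : 2 * m * (m ^ 2 - a ^ 2) / (R - m) ≤ m ^ 2 - a ^ 2 := by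
      rw [div_le_iff₀ (by linarith [abs_nonneg c])]
      nlinarith [mul_le_mul_of_nonneg_left (show 2 * m ≤ R - m by linarith [abs_nonneg c]) hδ]
    unfold phi
    nlinarith [neg_abs_le c, abs_nonneg c]

theorem exists_criticalFactor_eq_zero (ha : |a| < m) (hc : rPlus m a ^ 2 + a ^ 2 ≠ c) :
    ∃ r₀, rPlus m a < r₀ ∧ criticalFactor m a c r₀ = 0 := by
  obtain ⟨R, hR, hpos⟩ := exists_criticalFactor_pos (c := c) ha.le
  have hneg : criticalFactor m a c (rPlus m a) < 0 := by
    have := sub_ne_zero.2 hc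
    rw [criticalFactor_rPlus ha]
    exact neg_neg_of_pos (by positivity)
  have hcont : ContinuousOn (criticalFactor m a c) (Icc (rPlus m a) R) :=
    continuousOn_of_forall_continuousAt fun x hx =>
      (hasDerivAt_criticalFactor ((lt_rPlus ha).trans_le hx.1).ne').continuousAt
  obtain ⟨r₀, hr₀, h0⟩ := intermediate_value_Ioo hR.le hcont ⟨hneg, hpos⟩
  exact ⟨r₀, hr₀.1, h0⟩

theorem hasDerivAt_potential (hr : rPlus m a < r) :
    HasDerivAt (potential m a c)
      (criticalFactor m a c r * (2 * (r - m) / mu m a r ^ 2)) r := by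
  have hμ := (mu_pos hr).ne'
  have hrm : r - m ≠ 0 := sub_ne_zero.2 (ne_of_gt ((le_rPlus m a).trans_lt hr))
  have hmu : HasDerivAt (mu m a) (2 * r - 2 * m) r :=
    (((hasDerivAt_pow 2 r).sub ((hasDerivAt_id' r).const_mul (2 * m))).add_const
      (a ^ 2)).congr_deriv (by ring)
  refine ((((hasDerivAt_pow 2 r).add_const (a ^ 2)).sub_const c).pow 2 |>.div hmu
    hμ).congr_deriv ?_
  simp only [criticalFactor, phi, mu, Pi.pow_apply] at hμ ⊢
  field_simp
  ring

theorem two_mul_sub_div_mu_sq_pos (hr : rPlus m a < r) : 0 < 2 * (r - m) / mu m a r ^ 2 := by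
  have := mu_pos hr
  have : 0 < r - m := sub_pos.2 ((le_rPlus m a).trans_lt hr)
  positivity

theorem deriv_potential_eq_zero_iff (hr : rPlus m a < r) :
    deriv (potential m a c) r = 0 ↔ criticalFactor m a c r = 0 := by
  rw [(hasDerivAt_potential hr).deriv, mul_eq_zero, or_iff_left (two_mul_sub_div_mu_sq_pos hr).ne']

theorem sign_deriv_potential (ha : |a| ≤ m) {r₀ : ℝ} (hr₀ : rPlus m a < r₀)
    (hcrit : deriv (potential m a c) r₀ = 0) (hr : rPlus m a < r) :
    (r < r₀ → deriv (potential m a c) r < 0) ∧ (r₀ < r → 0 < deriv (potential m a c) r) := by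
  obtain ⟨hneg, hpos⟩ := sign_criticalFactor ha hr₀ ((deriv_potential_eq_zero_iff hr₀).1 hcrit) hr
  rw [(hasDerivAt_potential hr).deriv]
  exact ⟨fun h => mul_neg_of_neg_of_pos (hneg h) (two_mul_sub_div_mu_sq_pos hr),
    fun h => mul_pos (hpos h) (two_mul_sub_div_mu_sq_pos hr)⟩

theorem eq_of_deriv_potential_eq_zero (ha : |a| ≤ m) {r₁ r₂ : ℝ} (h₁ : rPlus m a < r₁)
    (h₂ : rPlus m a < r₂) (hc₁ : deriv (potential m a c) r₁ = 0)
    (hc₂ : deriv (potential m a c) r₂ = 0) : r₁ = r₂ := by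
  by_contra hne
  rcases lt_or_gt_of_ne hne with h | h
  · exact ((sign_deriv_potential ha h₂ hc₂ h₁).1 h).ne hc₁
  · exact ((sign_deriv_potential ha h₂ hc₂ h₁).2 h).ne' hc₁

theorem potential_lt_of_deriv_eq_zero (ha : |a| ≤ m) {r₀ : ℝ} (hr₀ : rPlus m a < r₀)
    (hcrit : deriv (potential m a c) r₀ = 0) (hr : rPlus m a < r) (hne : r ≠ r₀) :
    potential m a c r₀ < potential m a c r :=
  lt_of_deriv_neg_of_deriv_pos hr₀ (fun _ hx => (hasDerivAt_potential hx).differentiableAt)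
    (fun _ hx => (sign_deriv_potential ha hr₀ hcrit hx.1).1 hx.2)
    (fun _ hx => (sign_deriv_potential ha hr₀ hcrit (hr₀.trans hx)).2 hx) hr hne

theorem deriv_deriv_potential_pos (ha : |a| ≤ m) (hr : rPlus m a < r)
    (hcrit : deriv (potential m a c) r = 0) : 0 < deriv (deriv (potential m a c)) r := by
  have hm : 0 ≤ m := (abs_nonneg a).trans ha
  have hrm : m < r := (le_rPlus m a).trans_lt hr
  have h0 := (deriv_potential_eq_zero_iff hr).1 hcrit
  have hw : DifferentiableAt ℝ (fun x => 2 * (x - m) / mu m a x ^ 2) r := by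
    have := (mu_pos hr).ne'
    unfold mu at this ⊢
    fun_prop (disch := exact pow_ne_zero 2 this)
  have heq : deriv (potential m a c) =ᶠ[𝓝 r]
      fun x => criticalFactor m a c x * (2 * (x - m) / mu m a x ^ 2) := by
    filter_upwards [Ioi_mem_nhds hr] with x hx using (hasDerivAt_potential hx).deriv
  have hd : HasDerivAt (fun x => criticalFactor m a c x * (2 * (x - m) / mu m a x ^ 2)) _ r :=
    (hasDerivAt_criticalFactor hrm.ne').mul hw.hasDerivAt
  rw [heq.deriv_eq, hd.deriv, h0, zero_mul, add_zero]
  refine mul_pos ?_ (two_mul_sub_div_mu_sq_pos hr)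
  have hsum := sq_add_sq_sub_phi_pos hm hr
  have hφ' := deriv_phi_neg ha hrm
  rcases mul_eq_zero.1 h0 with hu | hv
  · rw [hu, zero_mul, sub_zero]
    exact mul_pos (by linarith) (by linarith)
  · rw [hv, mul_zero, zero_sub]
    exact neg_pos.2 (mul_neg_of_pos_of_neg (by linarith) hφ')
end Kerr

end

theorem kerr_potential_unique_minimum_general (m a ν z : ℝ)
    (ha : -m < a ∧ a < m) (hz : z = 1 ∨ z = -1) :
    let rp : ℝ := m + Real.sqrt (m ^ 2 - a ^ 2)
    let V : ℝ → ℝ := fun r => ((r ^ 2 + a ^ 2) * z - a * ν) ^ 2 / (r ^ 2 - 2 * m * r + a ^ 2)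
    (∀ r, rp < r → deriv V r = 0 → 0 < deriv (deriv V) r) ∧
    (∀ r₁ r₂, rp < r₁ → rp < r₂ → deriv V r₁ = 0 → deriv V r₂ = 0 → r₁ = r₂) ∧
    ((rp ^ 2 + a ^ 2) * z - a * ν ≠ 0 →
      ∃ rmin, rp < rmin ∧ deriv V rmin = 0 ∧
        ∀ r, rp < r → r ≠ rmin → V rmin < V r) := by
  intro rp V
  have ha' : |a| < m := abs_lt.2 ha
  have hz2 : z ^ 2 = 1 := by rcases hz with rfl | rfl <;> norm_num
  have hV : V = Kerr.potential m a (a * ν * z) := by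
    funext r
    simp only [V, Kerr.potential, Kerr.mu]
    congr 1
    linear_combination ((r ^ 2 + a ^ 2) ^ 2 - a ^ 2 * ν ^ 2) * hz2
  rw [hV]
  refine ⟨fun r hr => Kerr.deriv_deriv_potential_pos ha'.le hr,
    fun r₁ r₂ => Kerr.eq_of_deriv_potential_eq_zero ha'.le, fun hne => ?_⟩
  obtain ⟨r₀, hr₀, h0⟩ := Kerr.exists_criticalFactor_eq_zero (c := a * ν * z) ha'
    fun h : rp ^ 2 + a ^ 2 = _ => hne (by linear_combination z * h + a * ν * hz2)
  have hcrit := (Kerr.deriv_potential_eq_zero_iff hr₀).2 h0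
  exact ⟨r₀, hr₀, hcrit, fun r hr => Kerr.potential_lt_of_deriv_eq_zero ha'.le hr₀ hcrit hr⟩

/-- For `V_ν(r) = ((r² + a²)z - aν)²/μ(r)` on `(r₊, ∞)`: every critical point has
`V_ν'' > 0`, hence there is at most one critical point; and if
`(r₊² + a²)z - aν ≠ 0`, there is exactly one critical point `r_min`, a strict
global minimum of `V_ν` on `(r₊, ∞)`. -/
theorem kerr_potential_unique_minimum (m a ν z : ℝ) (hm : 0 < m)
    (ha : -m < a ∧ a < m) (hz : z = 1 ∨ z = -1) :
    let rp : ℝ := m + Real.sqrt (m ^ 2 - a ^ 2)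
    let V : ℝ → ℝ := fun r => ((r ^ 2 + a ^ 2) * z - a * ν) ^ 2 / (r ^ 2 - 2 * m * r + a ^ 2)
    (∀ r, rp < r → deriv V r = 0 → 0 < deriv (deriv V) r) ∧
    (∀ r₁ r₂, rp < r₁ → rp < r₂ → deriv V r₁ = 0 → deriv V r₂ = 0 → r₁ = r₂) ∧
    ((rp ^ 2 + a ^ 2) * z - a * ν ≠ 0 →
      ∃ rmin, rp < rmin ∧ deriv V rmin = 0 ∧
        ∀ r, rp < r → r ≠ rmin → V rmin < V r) :=
  kerr_potential_unique_minimum_general m a ν z ha hz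
end

section
/- If (r₊² + a²)z - aν = 0 (with z = ±1), then writing (r² + a²)z - aν = z(r² - r₊²), one has V_ν(r) = (r - r₊)(r + r₊)²/(r - r₋) on (r₊, ∞); in particular V_ν extends continuously to r₊ with V_ν(r₊) = 0, V_ν'(r₊) = (2r₊)²/(r₊ - r₋) > 0, and V_ν is strictly increasing on (r₊, ∞). -/
/-!
Under `aν = z(r₊² + a²)` the numerator `(r² + a²)z - aν` equals `z(r - r₊)(r + r₊)`, so one
factor `r - r₊` of `μ(r) = (r - r₊)(r - r₋)` cancels against the squared numerator, leaving
`W(r) = (r - r₊)(r + r₊)²/(r - r₋)`, smooth away from `r₋`. Its derivative is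
`(r + r₊)((r - r₊)(2r + r₊ - 3r₋) + 2r₊(r₊ - r₋))/(r - r₋)²`, visibly positive for `r ≥ r₊`.
-/

open Set

noncomputable def degeneratePotential (p q x : ℝ) : ℝ :=
  (x - p) * (x + p) ^ 2 / (x - q)

namespace degeneratePotential

variable {p q x : ℝ}

@[simp]
theorem apply_self : degeneratePotential p q p = 0 := by
  simp [degeneratePotential]

theorem eq_sq_div (z : ℝ) (hz : z ^ 2 = 1) (hx : x ≠ p) :
    (z * (x ^ 2 - p ^ 2)) ^ 2 / ((x - p) * (x - q)) = degeneratePotential p q x := by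
  have hxp : x - p ≠ 0 := sub_ne_zero.2 hx
  calc (z * (x ^ 2 - p ^ 2)) ^ 2 / ((x - p) * (x - q))
      = (x - p) * ((x - p) * (x + p) ^ 2) / ((x - p) * (x - q)) := by
        congr 1; linear_combination (x ^ 2 - p ^ 2) ^ 2 * hz
    _ = degeneratePotential p q x := mul_div_mul_left _ _ hxp

theorem hasDerivAt (hx : x ≠ q) :
    HasDerivAt (degeneratePotential p q)
      ((x + p) * ((x - p) * (2 * x + p - 3 * q) + 2 * p * (p - q)) / (x - q) ^ 2) x := by
  have hnum : HasDerivAt (fun y => (y - p) * (y + p) ^ 2)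
      (1 * (x + p) ^ 2 + (x - p) * (↑2 * (x + p) ^ 1 * 1)) x :=
    ((hasDerivAt_id' x).sub_const p).mul (((hasDerivAt_id' x).add_const p).pow 2)
  refine (hnum.div ((hasDerivAt_id' x).sub_const q) (sub_ne_zero.2 hx)).congr_deriv ?_
  ring

theorem deriv_self (hq : q ≠ p) :
    deriv (degeneratePotential p q) p = (2 * p) ^ 2 / (p - q) := by
  have hpq : p - q ≠ 0 := sub_ne_zero.2 hq.symm
  rw [(hasDerivAt hq.symm).deriv]
  field_simp
  ring

theorem deriv_pos (hp : 0 < p) (hq : q < p) (hx : p ≤ x) :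
    0 < deriv (degeneratePotential p q) x := by
  rw [(hasDerivAt (by linarith : q < x).ne').deriv]
  have hfactor : 0 < (x - p) * (2 * x + p - 3 * q) + 2 * p * (p - q) :=
    add_pos_of_nonneg_of_pos (mul_nonneg (by linarith) (by linarith))
      (mul_pos (by linarith) (by linarith))
  exact div_pos (mul_pos (by linarith) hfactor) (pow_pos (by linarith) 2)

theorem strictMonoOn (hp : 0 < p) (hq : q < p) :
    StrictMonoOn (degeneratePotential p q) (Ici p) := by
  refine strictMonoOn_of_deriv_pos (convex_Ici p) (fun x hx => ?_) (fun x hx => ?_)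
  · have hxq : x ≠ q := (hq.trans_le hx).ne'
    exact (hasDerivAt hxq).continuousAt.continuousWithinAt
  · rw [interior_Ici] at hx
    exact deriv_pos hp hq hx.le

end degeneratePotential

theorem sq_sub_two_mul_mul_add_sq_eq_mul {m a : ℝ} (ha : a ^ 2 ≤ m ^ 2) (r : ℝ) :
    r ^ 2 - 2 * m * r + a ^ 2 =
      (r - (m + √(m ^ 2 - a ^ 2))) * (r - (m - √(m ^ 2 - a ^ 2))) := by
  linear_combination Real.sq_sqrt (sub_nonneg.2 ha)

theorem kerr_potential_degenerate_case_general (m a ν z : ℝ)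
    (ha : -m < a ∧ a < m) (hz : z = 1 ∨ z = -1)
    (hν : a * ν = z * ((m + Real.sqrt (m ^ 2 - a ^ 2)) ^ 2 + a ^ 2)) :
    let rp : ℝ := m + Real.sqrt (m ^ 2 - a ^ 2)
    let rm : ℝ := m - Real.sqrt (m ^ 2 - a ^ 2)
    let W : ℝ → ℝ := fun r => (r - rp) * (r + rp) ^ 2 / (r - rm)
    (∀ r : ℝ, (r ^ 2 + a ^ 2) * z - a * ν = z * (r ^ 2 - rp ^ 2)) ∧
    (∀ r : ℝ, rp < r →
      ((r ^ 2 + a ^ 2) * z - a * ν) ^ 2 / (r ^ 2 - 2 * m * r + a ^ 2) = W r) ∧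
    W rp = 0 ∧
    deriv W rp = (2 * rp) ^ 2 / (rp - rm) ∧
    0 < deriv W rp ∧
    StrictMonoOn W (Set.Ioi rp) := by
  intro rp rm W
  obtain ⟨ha₁, ha₂⟩ := ha
  have hsub : a ^ 2 < m ^ 2 := by nlinarith
  have hsqrt : 0 < √(m ^ 2 - a ^ 2) := Real.sqrt_pos.2 (sub_pos.2 hsub)
  have hrp : 0 < rp := by linarith
  have hrm : rm < rp := by linarith
  have hz2 : z ^ 2 = 1 := by rcases hz with rfl | rfl <;> norm_num
  have hnum (r : ℝ) : (r ^ 2 + a ^ 2) * z - a * ν = z * (r ^ 2 - rp ^ 2) := by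
    rw [hν]; ring
  refine ⟨hnum, fun r hr => ?_, degeneratePotential.apply_self,
    degeneratePotential.deriv_self hrm.ne, degeneratePotential.deriv_pos hrp hrm le_rfl,
    (degeneratePotential.strictMonoOn hrp hrm).mono Ioi_subset_Ici_self⟩
  rw [hnum, sq_sub_two_mul_mul_add_sq_eq_mul hsub.le]
  exact degeneratePotential.eq_sq_div z hz2 hr.ne'

/-- If `(r₊² + a²)z - aν = 0` (with `z = ±1`), then `(r² + a²)z - aν = z(r² - r₊²)` and
`V_ν(r) = (r - r₊)(r + r₊)²/(r - r₋)` on `(r₊, ∞)`; the latter extends continuously to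
`r₊` with value `0`, derivative `(2r₊)²/(r₊ - r₋) > 0` there, and is strictly
increasing on `(r₊, ∞)`. -/
theorem kerr_potential_degenerate_case (m a ν z : ℝ) (hm : 0 < m)
    (ha : -m < a ∧ a < m) (hz : z = 1 ∨ z = -1)
    (hν : a * ν = z * ((m + Real.sqrt (m ^ 2 - a ^ 2)) ^ 2 + a ^ 2)) :
    let rp : ℝ := m + Real.sqrt (m ^ 2 - a ^ 2)
    let rm : ℝ := m - Real.sqrt (m ^ 2 - a ^ 2)
    let W : ℝ → ℝ := fun r => (r - rp) * (r + rp) ^ 2 / (r - rm)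
    (∀ r : ℝ, (r ^ 2 + a ^ 2) * z - a * ν = z * (r ^ 2 - rp ^ 2)) ∧
    (∀ r : ℝ, rp < r →
      ((r ^ 2 + a ^ 2) * z - a * ν) ^ 2 / (r ^ 2 - 2 * m * r + a ^ 2) = W r) ∧
    W rp = 0 ∧
    deriv W rp = (2 * rp) ^ 2 / (rp - rm) ∧
    0 < deriv W rp ∧
    StrictMonoOn W (Set.Ioi rp) :=
  kerr_potential_degenerate_case_general m a ν z ha hz hν
end
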